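/- Let n and m be positive even integers and set k = n/2, l = m/2. Let θ : 𝔽_{2^k} → 𝔽₂ and ϑ : 𝔽_{2^l} → 𝔽₂ be balanced functions. Define f : 𝔽_{2^k} × 𝔽_{2^k} → 𝔽₂ by f(x,y) = θ(x/y) if y ≠ 0 and f(x,0) = 0, and define g : 𝔽_{2^l} × 𝔽_{2^l} → 𝔽₂ by g(z,τ) = ϑ(z/τ) if τ ≠ 0 and g(z,0) = 0. Let (a,b) ≠ (0,0) in 𝔽_{2^k} × 𝔽_{2^k} and (c,d) ≠ (0,0) in 𝔽_{2^l} × 𝔽_{2^l}, and let H = {(x,y) : Tr(ax + by) = 0} and K = {(z,τ) : Tr(cz + dτ) = 0}, which are 𝔽₂-linear hyperplanes of dimensions n−1 and m−1. Let (α,β) ∈ 𝔽_{2^k} × 𝔽_{2^k} with Tr(aα + bβ) = 1 and (u,v) ∈ 𝔽_{2^l} × 𝔽_{2^l} with Tr(cu + dv) = 1. Then the function h : H × K → 𝔽₂ defined by h(w, w′) = f(w) ⊕ g(w′) ⊕ (f(w) ⊕ f(w + (α,β)))·(g(w′) ⊕ g(w′ + (u,v))) is a bent function on the (n+m−2)-dimensional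 𝔽₂-vector space H × K. -/

import Mathlib

/-!
Write `W_φ(M) = ∑ (-1)^(φ + M)` for the Walsh transform at a linear form `M`.
The `PS_ap` function `f` is bent on `F²`: cutting `F²` into the line `y = 0` and the lines
`x = u y`, balancedness of `θ` gives `W_f(M) = |F|` if `M` vanishes on the first factor, and
otherwise `W_f(M) = |F| (-1)^θ(u₀)` for the unique slope `u₀` with `M(u₀ y, y) = 0` for all `y`
(unique because `u ↦ (y ↦ M(u y, 0))` is then a bijection onto the dual of `F`).
For a hyperplane `H = ker T`, `T c = 1` and an extension `M` of `ℓ`, averaging over the two cosets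
gives `2 W_{f|H}(ℓ) = W_f(M) + W_f(M + T)` and `2 W_{f(· + c)|H}(ℓ) = ±(W_f(M) - W_f(M + T))`,
so exactly one of the two restricted transforms vanishes and the other has absolute value `|F|`.
Finally `2 (-1)^(x + y + (x + x')(y + y')) = (-1)^x ((-1)^y + (-1)^y') + (-1)^x' ((-1)^y - (-1)^y')`,
so `2 W_h` is an expression in these restricted transforms of absolute value `|F| |G| = 2^(k+l)`.
-/

open Finset

/-- The sign `(-1)^b` for `b ∈ 𝔽₂`. -/
def chi (b : ZMod 2) : ℤ := if b = 0 then 1 else -1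

/-- The Walsh transform of a Boolean function in `n` variables. -/
def walsh {n : ℕ} (f : (Fin n → ZMod 2) → ZMod 2) (ω : Fin n → ZMod 2) : ℤ :=
  ∑ x : Fin n → ZMod 2, chi (f x + ∑ i, ω i * x i)

/-- The Walsh transform of a Boolean function given on a product `𝔽₂ⁿ × 𝔽₂^m`. -/
def walsh2 {n m : ℕ} (f : (Fin n → ZMod 2) → (Fin m → ZMod 2) → ZMod 2)
    (α : Fin n → ZMod 2) (β : Fin m → ZMod 2) : ℤ :=
  ∑ x : Fin n → ZMod 2, ∑ y : Fin m → ZMod 2,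
    chi (f x y + (∑ i, α i * x i) + (∑ j, β j * y j))

/-- A Boolean function in `n` variables is bent if its Walsh transform only
takes the values `±2^(n/2)`. -/
def IsBent (n : ℕ) (f : (Fin n → ZMod 2) → ZMod 2) : Prop :=
  ∀ a, walsh f a = 2 ^ (n / 2) ∨ walsh f a = -(2 ^ (n / 2))

/-- Bentness for a function given on a product, i.e. as a function in `n + m` variables. -/
def IsBent2 (n m : ℕ) (f : (Fin n → ZMod 2) → (Fin m → ZMod 2) → ZMod 2) : Prop :=
  ∀ α β, walsh2 f α β = 2 ^ ((n + m) / 2) ∨ walsh2 f α β = -(2 ^ ((n + m) / 2))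

/-- `fd` is the dual of a bent function `f`:  `W_f(ω) = 2^(n/2) (−1)^{fd(ω)}`. -/
def IsDual {n : ℕ} (f fd : (Fin n → ZMod 2) → ZMod 2) : Prop :=
  ∀ ω, walsh f ω = 2 ^ (n / 2) * chi (fd ω)

/-- The dual for a bent function given on a product (a function of `n + m` variables). -/
def IsDual2 {n m : ℕ} (f fd : (Fin n → ZMod 2) → (Fin m → ZMod 2) → ZMod 2) : Prop :=
  ∀ α β, walsh2 f α β = 2 ^ ((n + m) / 2) * chi (fd α β)

/-- Insert the bit `b` at position `μ`, giving a vector of length `n` from one of length `n-1`. -/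
def insertAt {n : ℕ} (μ : Fin n) (b : ZMod 2) (x : Fin (n - 1) → ZMod 2) : Fin n → ZMod 2 :=
  fun i =>
    if h : (i : ℕ) < (μ : ℕ) then x ⟨i, by have := μ.isLt; omega⟩
    else if h' : (μ : ℕ) < (i : ℕ) then x ⟨(i : ℕ) - 1, by have := i.isLt; omega⟩
    else b

/-- Hamming weight of a vector in `𝔽₂ⁿ`. -/
def wt {n : ℕ} (ω : Fin n → ZMod 2) : ℕ := (Finset.univ.filter fun i => ω i ≠ 0).card

/-- `t`-resiliency (with `t : ℤ`, so that the convention that every function is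
`(-1)`-resilient holds). -/
def Resilient {n : ℕ} (t : ℤ) (f : (Fin n → ZMod 2) → ZMod 2) : Prop :=
  ∀ ω, (wt ω : ℤ) ≤ t → walsh f ω = 0

/-- `t`-resiliency for a function given on a product `𝔽₂ⁿ × 𝔽₂^m`. -/
def Resilient2 {n m : ℕ} (t : ℤ) (f : (Fin n → ZMod 2) → (Fin m → ZMod 2) → ZMod 2) : Prop :=
  ∀ α β, (wt α + wt β : ℤ) ≤ t → walsh2 f α β = 0

@[simp]
lemma chi_zero : chi 0 = 1 := rfl

@[simp]
lemma chi_one : chi 1 = -1 := rfl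

lemma chi_add (x y : ZMod 2) : chi (x + y) = chi x * chi y := by revert x y; decide

lemma chi_sub (x y : ZMod 2) : chi (x - y) = chi x * chi y := by revert x y; decide

lemma abs_chi (b : ZMod 2) : |chi b| = 1 := by revert b; decide

lemma one_add_chi (b : ZMod 2) : 1 + chi b = if b = 0 then 2 else 0 := by revert b; decide

lemma two_mul_chi_indirect (x x' y y' u v : ZMod 2) :
    2 * chi (x + y + (x + x') * (y + y') + (u + v)) =
      chi (x + u) * (chi (y + v) + chi (y' + v)) +
      chi (x' + u) * (chi (y + v) - chi (y' + v)) := by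
  revert x x' y y' u v; decide

lemma sum_chi_eq_zero_of_card_eq {α : Type*} [Fintype α] (θ : α → ZMod 2)
    (hθ : #{x | θ x = 0} = #{x | θ x = 1}) : ∑ x, chi (θ x) = 0 := by
  have h1 : ∀ z : ZMod 2, ¬z = 0 ↔ z = 1 := by decide
  simp only [chi, Finset.sum_ite, sum_const, h1, hθ]
  simp

section Walsh

variable {V W : Type*} [AddCommGroup V] [Module (ZMod 2) V] [Fintype V]
  [AddCommGroup W] [Module (ZMod 2) W] [Fintype W]

def walshSum (f : V → ZMod 2) (M : V →ₗ[ZMod 2] ZMod 2) : ℤ := ∑ x, chi (f x + M x)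

lemma sum_chi_linearMap_of_ne_zero {N : V →ₗ[ZMod 2] ZMod 2} (hN : N ≠ 0) :
    ∑ x, chi (N x) = 0 := by
  obtain ⟨x₀, hx₀⟩ : ∃ x₀, N x₀ ≠ 0 := by
    by_contra! h
    exact hN (LinearMap.ext h)
  replace hx₀ : N x₀ = 1 := (by decide : ∀ z : ZMod 2, z ≠ 0 → z = 1) _ hx₀
  have hshift : ∑ x, chi (N (x + x₀)) = ∑ x, chi (N x) :=
    Fintype.sum_equiv (Equiv.addRight x₀) _ _ fun _ => rfl
  simp only [map_add, hx₀, chi_add, chi_one, mul_neg_one, sum_neg_distrib]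
    at hshift
  linarith

variable {T : V →ₗ[ZMod 2] ZMod 2} {H : Submodule (ZMod 2) V} [Fintype H]

lemma two_mul_sum_submodule (hH : ∀ p, p ∈ H ↔ T p = 0) (φ : V → ℤ) :
    2 * ∑ w : H, φ w = ∑ p, φ p * (1 + chi (T p)) := by
  simp only [one_add_chi, mul_ite, mul_zero, ← Finset.sum_filter]
  rw [mul_sum, Finset.sum_subtype _ (p := (· ∈ H)) (fun p => by simp [hH])]
  exact sum_congr rfl fun _ _ => mul_comm _ _

lemma two_mul_walshSum_restrict (hH : ∀ p, p ∈ H ↔ T p = 0) (f : V → ZMod 2)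
    (M : V →ₗ[ZMod 2] ZMod 2) :
    2 * walshSum (fun w : H => f w) (M ∘ₗ H.subtype) = walshSum f M + walshSum f (M + T) := by
  simp only [walshSum, LinearMap.comp_apply, Submodule.subtype_apply]
  rw [two_mul_sum_submodule hH (fun p => chi (f p + M p)), ← sum_add_distrib]
  refine sum_congr rfl fun p _ => ?_
  rw [LinearMap.add_apply, ← add_assoc, chi_add (f p + M p)]
  ring

lemma two_mul_walshSum_restrict_translate (hH : ∀ p, p ∈ H ↔ T p = 0) (f : V → ZMod 2)
    {c : V} (hc : T c = 1) (M : V →ₗ[ZMod 2] ZMod 2) :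
    2 * walshSum (fun w : H => f (w + c)) (M ∘ₗ H.subtype) =
      chi (M c) * (walshSum f M - walshSum f (M + T)) := by
  simp only [walshSum, LinearMap.comp_apply, Submodule.subtype_apply]
  rw [two_mul_sum_submodule hH (fun p => chi (f (p + c) + M p)),
    ← (Equiv.subRight c).sum_comp, ← sum_sub_distrib, mul_sum]
  refine sum_congr rfl fun p _ => ?_
  simp only [Equiv.subRight_apply, sub_add_cancel, map_sub, hc, LinearMap.add_apply,
    ← add_sub_assoc, ← add_assoc, chi_sub, chi_add, chi_one]
  ring

lemma walshSum_restrict_dichotomy {e : ℤ} {f : V → ZMod 2} (hf : ∀ M, |walshSum f M| = e)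
    (hH : ∀ p, p ∈ H ↔ T p = 0) {c : V} (hc : T c = 1) (ℓ : H →ₗ[ZMod 2] ZMod 2) :
    |walshSum (fun w : H => f w) ℓ| = e ∧ walshSum (fun w : H => f (w + c)) ℓ = 0 ∨
      walshSum (fun w : H => f w) ℓ = 0 ∧ |walshSum (fun w : H => f (w + c)) ℓ| = e := by
  obtain ⟨M, rfl⟩ := LinearMap.exists_extend ℓ
  have hS := two_mul_walshSum_restrict hH f M
  have hS' := two_mul_walshSum_restrict_translate hH f hc M
  rcases abs_eq_abs.mp ((hf M).trans (hf (M + T)).symm) with hMT | hMT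
  · left
    rw [hMT, sub_self, mul_zero] at hS'
    refine ⟨?_, by linarith⟩
    rw [← hf (M + T), show walshSum (fun w : H => f w) (M ∘ₗ H.subtype) = walshSum f (M + T)
      by linarith]
  · right
    rw [hMT] at hS hS'
    refine ⟨by linarith, ?_⟩
    have : walshSum (fun w : H => f (w + c)) (M ∘ₗ H.subtype) =
        chi (M c) * -walshSum f (M + T) := by linarith
    rw [← hf (M + T), this, abs_mul, abs_chi, one_mul, abs_neg]

lemma two_mul_walshSum_indirect (f f' : V → ZMod 2) (g g' : W → ZMod 2)
    (L : V × W →ₗ[ZMod 2] ZMod 2) :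
    2 * walshSum (fun w => f w.1 + g w.2 + (f w.1 + f' w.1) * (g w.2 + g' w.2)) L =
      walshSum f (L ∘ₗ .inl _ _ _) *
          (walshSum g (L ∘ₗ .inr _ _ _) + walshSum g' (L ∘ₗ .inr _ _ _)) +
        walshSum f' (L ∘ₗ .inl _ _ _) *
          (walshSum g (L ∘ₗ .inr _ _ _) - walshSum g' (L ∘ₗ .inr _ _ _)) := by
  conv_lhs => rw [← L.coprod_comp_inl_inr]
  simp only [walshSum, Fintype.sum_prod_type, mul_sum, LinearMap.coprod_apply,
    two_mul_chi_indirect, sum_add_distrib]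
  simp only [mul_add, mul_sub, sum_add_distrib, sum_sub_distrib, sum_mul_sum]

end Walsh

lemma abs_mul_add_mul_sub_eq {x x' y y' e e' : ℤ}
    (hx : |x| = e ∧ x' = 0 ∨ x = 0 ∧ |x'| = e) (hy : |y| = e' ∧ y' = 0 ∨ y = 0 ∧ |y'| = e') :
    |x * (y + y') + x' * (y - y')| = e * e' := by
  rcases hx with ⟨hx, rfl⟩ | ⟨rfl, hx⟩ <;> rcases hy with ⟨hy, rfl⟩ | ⟨rfl, hy⟩ <;>
    simp [abs_mul, hx, hy]

section PSap

lemma bijective_comp_mulLeft {K F : Type*} [Field K] [Field F] [Algebra K F]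
    [FiniteDimensional K F] {M : F →ₗ[K] K} (hM : M ≠ 0) :
    Function.Bijective fun u : F => M ∘ₗ LinearMap.mulLeft K u := by
  let φ : F →ₗ[K] Module.Dual K F := (LinearMap.mul K F).compr₂ M
  have hinj : Function.Injective φ := by
    refine (injective_iff_map_eq_zero φ).mpr fun u hu => by_contra fun hu0 => hM ?_
    ext x
    simpa [φ, ← mul_assoc, mul_inv_cancel₀ hu0] using LinearMap.congr_fun hu (u⁻¹ * x)
  exact ⟨hinj, (LinearMap.injective_iff_surjective_of_finrank_eq_finrank
    Subspace.dual_finrank_eq.symm).mp hinj⟩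

variable {F : Type*} [Field F] [Fintype F]

lemma sum_eq_sum_add_sum_lines [DecidableEq F] {R : Type*} [AddCommMonoid R] (φ : F × F → R) :
    ∑ p, φ p = ∑ x, φ (x, 0) + ∑ u, ∑ y ∈ univ.erase 0, φ (u * y, y) := by
  rw [Fintype.sum_prod_type_right, ← add_sum_erase _ _ (mem_univ 0), sum_comm (s := univ)]
  congr 1
  refine sum_congr rfl fun y hy => ?_
  exact (Fintype.sum_equiv (Equiv.mulRight₀ y (ne_of_mem_erase hy)) _ _ fun _ => rfl).symm

variable [DecidableEq F] [Algebra (ZMod 2) F] {θ : F → ZMod 2} {f : F × F → ZMod 2}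

lemma walshSum_psap_coprod (hf : ∀ p, f p = if p.2 = 0 then 0 else θ (p.1 / p.2))
    (hθ : ∑ u, chi (θ u) = 0) (M₁ M₂ : F →ₗ[ZMod 2] ZMod 2) :
    walshSum f (M₁.coprod M₂) = ∑ x, chi (M₁ x) +
      ∑ u, chi (θ u) * ∑ y, chi ((M₁ ∘ₗ LinearMap.mulLeft (ZMod 2) u + M₂) y) := by
  rw [walshSum, sum_eq_sum_add_sum_lines]
  congr 1
  · simp [hf]
  · have hline : ∀ u, ∑ y ∈ univ.erase 0, chi (f (u * y, y) + M₁.coprod M₂ (u * y, y)) =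
        chi (θ u) * ∑ y, chi ((M₁ ∘ₗ LinearMap.mulLeft (ZMod 2) u + M₂) y) - chi (θ u) := by
      intro u
      have hterm : ∀ y ∈ univ.erase 0, chi (f (u * y, y) + M₁.coprod M₂ (u * y, y)) =
          chi (θ u) * chi ((M₁ ∘ₗ LinearMap.mulLeft (ZMod 2) u + M₂) y) := fun y hy => by
        rw [hf, if_neg (ne_of_mem_erase hy), mul_div_cancel_right₀ _ (ne_of_mem_erase hy)]
        exact chi_add _ _
      rw [sum_congr rfl hterm, ← mul_sum, sum_erase_eq_sub (mem_univ 0), map_zero, chi_zero,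
        mul_sub, mul_one]
    simp only [hline, sum_sub_distrib, hθ, sub_zero]

lemma abs_walshSum_psap (hf : ∀ p, f p = if p.2 = 0 then 0 else θ (p.1 / p.2))
    (hθ : ∑ u, chi (θ u) = 0) (M : F × F →ₗ[ZMod 2] ZMod 2) :
    |walshSum f M| = Fintype.card F := by
  rw [← M.coprod_comp_inl_inr, walshSum_psap_coprod hf hθ]
  set M₁ := M ∘ₗ LinearMap.inl (ZMod 2) F F
  by_cases hM₁ : M₁ = 0
  · simp [hM₁, ← sum_mul, hθ]
  · obtain ⟨u₀, hu₀ : M₁ ∘ₗ _ = _⟩ :=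
      (bijective_comp_mulLeft hM₁).2 (-(M ∘ₗ LinearMap.inr (ZMod 2) F F))
    rw [sum_chi_linearMap_of_ne_zero hM₁, zero_add, sum_eq_single u₀]
    · simp [hu₀, abs_mul, abs_chi]
    · intro u _ hu
      rw [sum_chi_linearMap_of_ne_zero, mul_zero]
      refine fun h => hu ((bijective_comp_mulLeft hM₁).1 ?_)
      exact (eq_neg_of_add_eq_zero_left h).trans hu₀.symm
    · simp

lemma walshSum_psap_restrict_dichotomy (hf : ∀ p, f p = if p.2 = 0 then 0 else θ (p.1 / p.2))
    (hθ : ∑ u, chi (θ u) = 0) {a b : F} {H : Submodule (ZMod 2) (F × F)} [Fintype H]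
    (hH : ∀ p : F × F, p ∈ H ↔ Algebra.trace (ZMod 2) F (a * p.1 + b * p.2) = 0)
    {α β : F} (hαβ : Algebra.trace (ZMod 2) F (a * α + b * β) = 1) (ℓ : H →ₗ[ZMod 2] ZMod 2) :
    |walshSum (fun w : H => f w) ℓ| = Fintype.card F ∧
        walshSum (fun w : H => f (w + (α, β))) ℓ = 0 ∨
      walshSum (fun w : H => f w) ℓ = 0 ∧
        |walshSum (fun w : H => f (w + (α, β))) ℓ| = Fintype.card F :=
  walshSum_restrict_dichotomy (abs_walshSum_psap hf hθ) (T := Algebra.trace (ZMod 2) F ∘ₗ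
    (LinearMap.mulLeft (ZMod 2) a).coprod (LinearMap.mulLeft (ZMod 2) b)) hH hαβ ℓ

end PSap

open scoped Classical in
theorem bent_PSap_indirect_sum_general (k l : ℕ) (hk : 0 < k)
    (F : Type) [Field F] [Fintype F] [Algebra (ZMod 2) F] (hF : Fintype.card F = 2 ^ k)
    (G : Type) [Field G] [Fintype G] [Algebra (ZMod 2) G] (hG : Fintype.card G = 2 ^ l)
    (θ : F → ZMod 2) (ϑ : G → ZMod 2)
    (hθ : (Finset.univ.filter fun x => θ x = 0).card = 2 ^ (k - 1) ∧
          (Finset.univ.filter fun x => θ x = 1).card = 2 ^ (k - 1))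
    (hϑ : (Finset.univ.filter fun z => ϑ z = 0).card = 2 ^ (l - 1) ∧
          (Finset.univ.filter fun z => ϑ z = 1).card = 2 ^ (l - 1))
    (f : F × F → ZMod 2) (hf : ∀ p, f p = if p.2 = 0 then 0 else θ (p.1 / p.2))
    (g : G × G → ZMod 2) (hg : ∀ p, g p = if p.2 = 0 then 0 else ϑ (p.1 / p.2))
    (a b : F) (c d : G)
    (H : Submodule (ZMod 2) (F × F))
    (hH : ∀ p : F × F, p ∈ H ↔ Algebra.trace (ZMod 2) F (a * p.1 + b * p.2) = 0)
    (K : Submodule (ZMod 2) (G × G))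
    (hK : ∀ p : G × G, p ∈ K ↔ Algebra.trace (ZMod 2) G (c * p.1 + d * p.2) = 0)
    (α β : F) (hαβ : Algebra.trace (ZMod 2) F (a * α + b * β) = 1)
    (uu vv : G) (huv : Algebra.trace (ZMod 2) G (c * uu + d * vv) = 1)
    (h : H × K → ZMod 2)
    (hh : ∀ w : H × K,
      h w = f (w.1 : F × F) + g (w.2 : G × G) +
        (f (w.1 : F × F) + f ((w.1 : F × F) + (α, β))) *
          (g (w.2 : G × G) + g ((w.2 : G × G) + (uu, vv)))) :
    ∀ L : (H × K) →ₗ[ZMod 2] ZMod 2,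
      (∑ w : H × K, chi (h w + L w)) = 2 ^ (k + l - 1) ∨
      (∑ w : H × K, chi (h w + L w)) = -(2 ^ (k + l - 1)) := by
  intro L
  obtain rfl : h = _ := funext hh
  have hθ₀ := sum_chi_eq_zero_of_card_eq θ (hθ.1.trans hθ.2.symm)
  have hϑ₀ := sum_chi_eq_zero_of_card_eq ϑ (hϑ.1.trans hϑ.2.symm)
  have h2 := abs_mul_add_mul_sub_eq
    (walshSum_psap_restrict_dichotomy hf hθ₀ hH hαβ (L ∘ₗ .inl _ _ _))
    (walshSum_psap_restrict_dichotomy hg hϑ₀ hK huv (L ∘ₗ .inr _ _ _))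
  rw [← two_mul_walshSum_indirect, hF, hG, abs_mul, abs_two] at h2
  have hkl : (2 : ℤ) ^ k * 2 ^ l = 2 * 2 ^ (k + l - 1) := by
    rw [← pow_succ', ← pow_add]
    congr 1
    omega
  push_cast at h2
  rw [hkl, mul_right_inj' two_ne_zero] at h2
  exact abs_eq (by positivity) |>.mp h2

open scoped Classical in
/-- the modified indirect sum of two `PS_{ap}` bent functions, restricted to
linear hyperplanes `H` and `K`, is bent on the `(n+m-2)`-dimensional space `H × K`
(here `n = 2k`, `m = 2l`, and `F`, `G` are the fields with `2^k` and `2^l` elements). -/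
theorem bent_PSap_indirect_sum (k l : ℕ) (hk : 0 < k) (hl : 0 < l)
    (F : Type) [Field F] [Fintype F] [Algebra (ZMod 2) F] (hF : Fintype.card F = 2 ^ k)
    (G : Type) [Field G] [Fintype G] [Algebra (ZMod 2) G] (hG : Fintype.card G = 2 ^ l)
    (θ : F → ZMod 2) (ϑ : G → ZMod 2)
    (hθ : (Finset.univ.filter fun x => θ x = 0).card = 2 ^ (k - 1) ∧
          (Finset.univ.filter fun x => θ x = 1).card = 2 ^ (k - 1))
    (hϑ : (Finset.univ.filter fun z => ϑ z = 0).card = 2 ^ (l - 1) ∧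
          (Finset.univ.filter fun z => ϑ z = 1).card = 2 ^ (l - 1))
    (f : F × F → ZMod 2) (hf : ∀ p, f p = if p.2 = 0 then 0 else θ (p.1 / p.2))
    (g : G × G → ZMod 2) (hg : ∀ p, g p = if p.2 = 0 then 0 else ϑ (p.1 / p.2))
    (a b : F) (hab : (a, b) ≠ (0, 0)) (c d : G) (hcd : (c, d) ≠ (0, 0))
    (H : Submodule (ZMod 2) (F × F))
    (hH : ∀ p : F × F, p ∈ H ↔ Algebra.trace (ZMod 2) F (a * p.1 + b * p.2) = 0)
    (K : Submodule (ZMod 2) (G × G))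
    (hK : ∀ p : G × G, p ∈ K ↔ Algebra.trace (ZMod 2) G (c * p.1 + d * p.2) = 0)
    (α β : F) (hαβ : Algebra.trace (ZMod 2) F (a * α + b * β) = 1)
    (uu vv : G) (huv : Algebra.trace (ZMod 2) G (c * uu + d * vv) = 1)
    (h : H × K → ZMod 2)
    (hh : ∀ w : H × K,
      h w = f (w.1 : F × F) + g (w.2 : G × G) +
        (f (w.1 : F × F) + f ((w.1 : F × F) + (α, β))) *
          (g (w.2 : G × G) + g ((w.2 : G × G) + (uu, vv)))) :
    ∀ L : (H × K) →ₗ[ZMod 2] ZMod 2,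
      (∑ w : H × K, chi (h w + L w)) = 2 ^ (k + l - 1) ∨
      (∑ w : H × K, chi (h w + L w)) = -(2 ^ (k + l - 1)) :=
  bent_PSap_indirect_sum_general k l hk F hF G hG θ ϑ hθ hϑ f hf g hg a b c d H hH K hK α β hαβ uu
    vv huv h hh
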